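/- Let 𝒫 be a finite set of integer pairs p = (p₁,p₂) with 0 ≤ p₁ ≤ p₂ and p₂ ≠ 0, and let {A_p}_{p∈𝒫} be real numbers with 8 Σ_{p∈𝒫} c_p A_p = 1 and Σ_{p∈𝒫} (p₁²+p₂²) c_p A_p ≠ 0; set M_𝒫 = (1/2)(Σ_{p∈𝒫} (p₁²+p₂²) c_p A_p)⁻¹. Let Ω ⊆ ℝ² be open, let f be continuously differentiable on Ω, and let x ∈ Ω. Then |∇f(x)|² = (1/2) M_𝒫 · lim_{l→0⁺} (1/l²) Σ_{p∈𝒫} A_p Σ_{D(x',l) ∼_p D(x,l)} ( I(f,x',l) − I(f,x,l) )². -/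

import Mathlib

open MeasureTheory Real Filter Topology

noncomputable section

/-- The `l`-square centered at `x`. -/
def Dsq (x : ℝ × ℝ) (l : ℝ) : Set (ℝ × ℝ) :=
  Set.Icc (x.1 - l / 2) (x.1 + l / 2) ×ˢ Set.Icc (x.2 - l / 2) (x.2 + l / 2)

/-- `I(f,x,l)`: the average of `f` over the `l`-square centered at `x`. -/
def Iavg (f : ℝ × ℝ → ℝ) (x : ℝ × ℝ) (l : ℝ) : ℝ :=
  (1 / l ^ 2) * ∫ ξ in Dsq x l, f ξ

/-- `D(x',l)` is a `p`-neighbor of `D(x,l)`. -/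
def isNbr (p : ℤ × ℤ) (l : ℝ) (x x' : ℝ × ℝ) : Prop :=
  (|x'.1 - x.1| = (p.1 : ℝ) * l ∧ |x'.2 - x.2| = (p.2 : ℝ) * l) ∨
    (|x'.1 - x.1| = (p.2 : ℝ) * l ∧ |x'.2 - x.2| = (p.1 : ℝ) * l)

/-- `I_p(f,x,l)`: sum of averages over all `p`-neighbors of `D(x,l)`. -/
def Ipavg (f : ℝ × ℝ → ℝ) (p : ℤ × ℤ) (x : ℝ × ℝ) (l : ℝ) : ℝ :=
  ∑ᶠ x' ∈ {x' : ℝ × ℝ | isNbr p l x x'}, Iavg f x' l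

/-- The constant `c_p` (for integer pairs with `0 ≤ p₁ ≤ p₂`). -/
def cP (p : ℤ × ℤ) : ℝ :=
  if p.1 = 0 ∧ p.2 = 0 then 1 / 8 else if p.1 = 0 ∨ p.1 = p.2 then 1 / 2 else 1

/-- The constant `T_p^(k)`. -/
def Tc (p : ℤ × ℤ) (k : ℕ) : ℝ :=
  2 * cP p *
    (((2 * (p.1 : ℂ) + 1) + (2 * (p.2 : ℂ) + 1) * Complex.I) ^ (4 * k + 2)
      - ((2 * (p.1 : ℂ) - 1) + (2 * (p.2 : ℂ) + 1) * Complex.I) ^ (4 * k + 2)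
      + ((2 * (p.1 : ℂ) - 1) + (2 * (p.2 : ℂ) - 1) * Complex.I) ^ (4 * k + 2)
      - ((2 * (p.1 : ℂ) + 1) + (2 * (p.2 : ℂ) - 1) * Complex.I) ^ (4 * k + 2)).im

/-- The polynomial harmonic function `f_n^x`. -/
def fP (x : ℝ × ℝ) (n : ℕ) (ξ : ℝ × ℝ) : ℝ :=
  ∑ j ∈ Finset.range (n / 2 + 1),
    (-1 : ℝ) ^ j * (ξ.1 - x.1) ^ (n - 2 * j) * (ξ.2 - x.2) ^ (2 * j) /
      (((n - 2 * j).factorial : ℝ) * ((2 * j).factorial : ℝ))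

/-- The polynomial harmonic function `g_n^x`. -/
def gP (x : ℝ × ℝ) (n : ℕ) (ξ : ℝ × ℝ) : ℝ :=
  ∑ j ∈ Finset.range ((n - 1) / 2 + 1),
    (-1 : ℝ) ^ j * (ξ.1 - x.1) ^ (n - 2 * j - 1) * (ξ.2 - x.2) ^ (2 * j + 1) /
      (((n - 2 * j - 1).factorial : ℝ) * ((2 * j + 1).factorial : ℝ))

/-- Partial derivative in the first coordinate. -/
def pd1 (f : ℝ × ℝ → ℝ) (y : ℝ × ℝ) : ℝ := fderiv ℝ f y (1, 0)

/-- Partial derivative in the second coordinate. -/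
def pd2 (f : ℝ × ℝ → ℝ) (y : ℝ × ℝ) : ℝ := fderiv ℝ f y (0, 1)

/-- `h` is harmonic on the open set `Ω`. -/
def HarmonicOn (h : ℝ × ℝ → ℝ) (Ω : Set (ℝ × ℝ)) : Prop :=
  ContDiffOn ℝ 2 h Ω ∧ ∀ y ∈ Ω, pd1 (pd1 h) y + pd2 (pd2 h) y = 0

/-- `‖𝒫‖ = max_{p ∈ 𝒫} ‖2p+(1,1)‖`. -/
def PNorm (P : Finset (ℤ × ℤ)) : ℝ :=
  sSup ((fun p : ℤ × ℤ =>
    Real.sqrt ((2 * (p.1 : ℝ) + 1) ^ 2 + (2 * (p.2 : ℝ) + 1) ^ 2)) '' ↑P)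

/-- The four corners of the unit square. -/
def qv : Fin 4 → ℝ × ℝ := ![(0, 0), (1, 0), (1, 1), (0, 1)]

/-- The contraction `F_i(x) = (x + q_i)/2`. -/
def Fc (i : Fin 4) (x : ℝ × ℝ) : ℝ × ℝ := ((x.1 + (qv i).1) / 2, (x.2 + (qv i).2) / 2)

/-- `F_w = F_{w₁} ∘ ⋯ ∘ F_{w_m}` for a word `w` of length `m`. -/
def Fword {m : ℕ} (w : Fin m → Fin 4) : ℝ × ℝ → ℝ × ℝ :=
  (List.ofFn w).foldr (fun i acc => Fc i ∘ acc) id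

/-- The center of the `m`-cell `F_w S`. -/
def cellCtr {m : ℕ} (w : Fin m → Fin 4) : ℝ × ℝ := Fword w (1 / 2, 1 / 2)

/-- `B_w(f)`: the average of `f` over the `m`-cell `F_w S` (a dyadic square of
side length `2⁻ᵐ` centered at `cellCtr w`). -/
def Bav (f : ℝ × ℝ → ℝ) {m : ℕ} (w : Fin m → Fin 4) : ℝ :=
  Iavg f (cellCtr w) ((1 / 2) ^ m)

/-!
For `l > 0` the `p`-neighbours of `D(x,l)` are the squares `D(x + l v, l)`, `v` running over the
orbit of `p` under the symmetries of `ℤ²`. Averaging over a square commutes with translation, so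
strict differentiability of `f` at `x` gives `(I(f,x+lv,l) - I(f,x,l)) / l → ∇f(x)·v`. Summing
squares over the orbit cancels the cross terms, `∑_v (v·g)² = 4 c_p (p₁² + p₂²) |g|²`, and the
weighted sum over `𝒫` tends to `4 (∑_p (p₁² + p₂²) c_p A_p) |∇f(x)|²`.
-/

theorem isCompact_Dsq (x : ℝ × ℝ) (l : ℝ) : IsCompact (Dsq x l) :=
  isCompact_Icc.prod isCompact_Icc

theorem measureReal_Dsq (x : ℝ × ℝ) {l : ℝ} (hl : 0 ≤ l) : volume.real (Dsq x l) = l ^ 2 := by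
  rw [measureReal_def, Dsq, Measure.volume_eq_prod, Measure.prod_prod, Real.volume_Icc,
    Real.volume_Icc, ← ENNReal.ofReal_mul (by linarith), ENNReal.toReal_ofReal (by nlinarith)]
  ring

theorem Dsq_subset_closedBall (x : ℝ × ℝ) (l : ℝ) : Dsq x l ⊆ Metric.closedBall x (l / 2) := by
  rintro ξ ⟨⟨h1, h1'⟩, h2, h2'⟩
  rw [Metric.mem_closedBall, Prod.dist_eq, Real.dist_eq, Real.dist_eq]
  exact max_le (abs_sub_le_iff.2 ⟨by linarith, by linarith⟩)
    (abs_sub_le_iff.2 ⟨by linarith, by linarith⟩)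

theorem preimage_add_right_Dsq (x w : ℝ × ℝ) (l : ℝ) :
    (· + w) ⁻¹' Dsq (x + w) l = Dsq x l := by
  ext ξ
  simp only [Set.mem_preimage, Dsq, Set.mem_prod, Set.mem_Icc, Prod.fst_add, Prod.snd_add]
  constructor <;> rintro ⟨⟨_, _⟩, _, _⟩ <;> refine ⟨⟨?_, ?_⟩, ?_, ?_⟩ <;> linarith

theorem setIntegral_Dsq_add (f : ℝ × ℝ → ℝ) (x w : ℝ × ℝ) (l : ℝ) :
    ∫ ξ in Dsq (x + w) l, f ξ = ∫ ξ in Dsq x l, f (ξ + w) := by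
  rw [← preimage_add_right_Dsq x w l]
  exact ((measurePreserving_add_right volume w).setIntegral_preimage_emb
    (measurableEmbedding_addRight w) f _).symm

theorem abs_Iavg_add_sub_Iavg_sub_le {f : ℝ × ℝ → ℝ} {x w : ℝ × ℝ} {l c C : ℝ} (hl : 0 < l)
    (hf : IntegrableOn f (Dsq x l)) (hfw : IntegrableOn (fun ξ => f (ξ + w)) (Dsq x l))
    (hC : ∀ ξ ∈ Dsq x l, |f (ξ + w) - f ξ - c| ≤ C) :
    |Iavg f (x + w) l - Iavg f x l - c| ≤ C := by
  have hfin := (isCompact_Dsq x l).measure_lt_top (μ := volume)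
  have hvol := measureReal_Dsq x hl.le
  have hsplit : Iavg f (x + w) l - Iavg f x l - c
      = (1 / l ^ 2) * ∫ ξ in Dsq x l, (f (ξ + w) - f ξ - c) := by
    rw [integral_sub (f := fun ξ => f (ξ + w) - f ξ) (hfw.sub hf) (integrableOn_const hfin.ne),
      integral_sub hfw hf, setIntegral_const, hvol, Iavg, Iavg, setIntegral_Dsq_add, smul_eq_mul]
    field_simp
  have hint := norm_setIntegral_le_of_norm_le_const hfin (f := fun ξ => f (ξ + w) - f ξ - c) hC
  rw [hvol] at hint
  rw [hsplit, abs_mul, abs_of_pos (by positivity)]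
  calc 1 / l ^ 2 * |∫ ξ in Dsq x l, (f (ξ + w) - f ξ - c)| ≤ 1 / l ^ 2 * (C * l ^ 2) := by
        gcongr; exact hint
    _ = C := by field_simp

theorem eventually_forall_Dsq_mem {x : ℝ × ℝ} {U : Set ((ℝ × ℝ) × (ℝ × ℝ))} (hU : U ∈ 𝓝 (x, x))
    (v : ℝ × ℝ) : ∀ᶠ l in 𝓝 (0 : ℝ), ∀ ξ ∈ Dsq x l, (ξ + l • v, ξ) ∈ U := by
  have hcont : Continuous fun q : ℝ × (ℝ × ℝ) => (q.2 + q.1 • v, q.2) := by fun_prop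
  have hU' : (fun q : ℝ × (ℝ × ℝ) => (q.2 + q.1 • v, q.2)) ⁻¹' U ∈ 𝓝 ((0 : ℝ), x) :=
    hcont.continuousAt.preimage_mem_nhds (by simpa using hU)
  obtain ⟨r, hr, hball⟩ := Metric.mem_nhds_iff.1 hU'
  filter_upwards [Metric.ball_mem_nhds 0 hr] with l hl ξ hξ
  rw [Metric.mem_ball, Real.dist_0_eq_abs] at hl
  refine @hball (l, ξ) (Metric.mem_ball.2 ?_)
  rw [Prod.dist_eq, Real.dist_0_eq_abs]
  refine max_lt hl ?_
  calc dist ξ x ≤ l / 2 := Dsq_subset_closedBall x l hξ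
    _ < r := by cases abs_lt.1 hl; linarith

theorem HasStrictFDerivAt.tendsto_Iavg_sub_div {f : ℝ × ℝ → ℝ} {φ : ℝ × ℝ →L[ℝ] ℝ}
    {x : ℝ × ℝ} (hf : HasStrictFDerivAt f φ x) (v : ℝ × ℝ) :
    Tendsto (fun l => (Iavg f (x + l • v) l - Iavg f x l) / l) (𝓝[>] 0) (𝓝 (φ v)) := by
  -- strict differentiability makes `f` Lipschitz near `x`, hence integrable on small squares
  obtain ⟨K, s, hs, hlip⟩ := hf.exists_lipschitzOnWith
  rw [Metric.tendsto_nhds]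
  intro ε hε
  set ε' := ε / (‖v‖ + 1)
  have hε' : 0 < ε' := by positivity
  have hU := inter_mem (hf.isLittleO.def hε') (prod_mem_nhds hs hs)
  filter_upwards [self_mem_nhdsWithin, nhdsWithin_le_nhds (eventually_forall_Dsq_mem hU v)]
    with l (hl : 0 < l) hD
  have hsub : Dsq x l ⊆ s := fun ξ hξ => (hD ξ hξ).2.2
  have hbound : ∀ ξ ∈ Dsq x l, |f (ξ + l • v) - f ξ - φ (l • v)| ≤ ε' * l * ‖v‖ := by
    intro ξ hξ
    have hsmall := (hD ξ hξ).1
    simp only [Set.mem_ofPred_eq, add_sub_cancel_left, norm_smul, Real.norm_of_nonneg hl.le]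
      at hsmall
    rw [← Real.norm_eq_abs]; linarith
  have hcont := hlip.continuousOn
  have hI := (hcont.mono hsub).integrableOn_compact (μ := volume) (isCompact_Dsq x l)
  have hIv := ContinuousOn.integrableOn_compact (μ := volume) (isCompact_Dsq x l)
    (hcont.comp (continuous_add_const (l • v)).continuousOn fun ξ hξ => (hD ξ hξ).2.1)
  have hdiff := abs_Iavg_add_sub_Iavg_sub_le hl hI hIv hbound
  rw [map_smul, smul_eq_mul] at hdiff
  rw [Real.dist_eq, div_sub' hl.ne', abs_div, _root_.abs_of_pos hl, div_lt_iff₀ hl]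
  have hε'v : ε' * ‖v‖ < ε := by
    rw [div_mul_eq_mul_div, div_lt_iff₀ (by positivity)]
    nlinarith [norm_nonneg v]
  calc |Iavg f (x + l • v) l - Iavg f x l - l * φ v| ≤ ε' * l * ‖v‖ := hdiff
    _ < ε * l := by nlinarith

def nbrOffsets (p : ℤ × ℤ) : Finset (ℤ × ℤ) :=
  {(p.1, p.2), (p.1, -p.2), (-p.1, p.2), (-p.1, -p.2),
    (p.2, p.1), (p.2, -p.1), (-p.2, p.1), (-p.2, -p.1)}

theorem mem_nbrOffsets {p v : ℤ × ℤ} (hp1 : 0 ≤ p.1) (hp2 : 0 ≤ p.2) :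
    v ∈ nbrOffsets p ↔ (|v.1| = p.1 ∧ |v.2| = p.2) ∨ (|v.1| = p.2 ∧ |v.2| = p.1) := by
  obtain ⟨v1, v2⟩ := v
  simp only [nbrOffsets, Finset.mem_insert, Finset.mem_singleton, Prod.ext_iff, abs_eq hp1,
    abs_eq hp2]
  omega

theorem exists_intCast_mul_of_abs_eq {y l : ℝ} (hl : 0 < l) {n : ℤ} (h : |y| = n * l) :
    ∃ k : ℤ, y = k * l ∧ |k| = n := by
  have hn : 0 ≤ n := by
    have : (0 : ℝ) ≤ n * l := h ▸ abs_nonneg y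
    exact_mod_cast nonneg_of_mul_nonneg_left this hl
  rcases abs_eq (h ▸ abs_nonneg y) |>.1 h with hy | hy
  · exact ⟨n, hy, abs_of_nonneg hn⟩
  · exact ⟨-n, by push_cast; linarith, by rw [abs_neg, abs_of_nonneg hn]⟩

theorem setOf_isNbr_eq {p : ℤ × ℤ} (hp1 : 0 ≤ p.1) (hp2 : 0 ≤ p.2) {l : ℝ} (hl : 0 < l)
    (x : ℝ × ℝ) :
    {x' | isNbr p l x x'} = (nbrOffsets p).image fun v => x + l • ((v.1 : ℝ), (v.2 : ℝ)) := by
  ext x'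
  simp only [Set.mem_ofPred_eq, Finset.coe_image, Set.mem_image, Finset.mem_coe,
    mem_nbrOffsets hp1 hp2]
  constructor
  · rintro (⟨h1, h2⟩ | ⟨h1, h2⟩) <;>
    · obtain ⟨k1, e1, a1⟩ := exists_intCast_mul_of_abs_eq hl h1
      obtain ⟨k2, e2, a2⟩ := exists_intCast_mul_of_abs_eq hl h2
      refine ⟨(k1, k2), by tauto, Prod.ext ?_ ?_⟩ <;>
        simp only [Prod.fst_add, Prod.snd_add, Prod.smul_mk, smul_eq_mul] <;> linarith
  · rintro ⟨v, hv, rfl⟩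
    simp only [isNbr, Prod.fst_add, Prod.snd_add, Prod.smul_mk, smul_eq_mul, add_sub_cancel_left,
      abs_mul, abs_of_pos hl, ← Int.cast_abs]
    rcases hv with ⟨h1, h2⟩ | ⟨h1, h2⟩ <;> simp only [h1, h2, mul_comm l, true_and, true_or, or_true]

theorem finsum_isNbr_eq_sum {M : Type*} [AddCommMonoid M] {p : ℤ × ℤ} (hp1 : 0 ≤ p.1)
    (hp2 : 0 ≤ p.2) {l : ℝ} (hl : 0 < l) (x : ℝ × ℝ) (g : ℝ × ℝ → M) :
    ∑ᶠ x' ∈ {x' | isNbr p l x x'}, g x'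
      = ∑ v ∈ nbrOffsets p, g (x + l • ((v.1 : ℝ), (v.2 : ℝ))) := by
  rw [setOf_isNbr_eq hp1 hp2 hl, finsum_mem_coe_finset, Finset.sum_image]
  intro v _ w _ hvw
  have h := smul_right_injective _ hl.ne' (add_left_cancel hvw)
  simp only [Prod.ext_iff, Int.cast_inj] at h
  exact Prod.ext h.1 h.2

-- When `p₁ = 0` or `p₁ = p₂` the eight offsets collapse to four; `c_p` accounts for this.
theorem sum_nbrOffsets_sq {p : ℤ × ℤ} (hp1 : 0 ≤ p.1) (hp12 : p.1 ≤ p.2) (hp2 : p.2 ≠ 0)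
    (a b : ℝ) :
    ∑ v ∈ nbrOffsets p, ((v.1 : ℝ) * a + v.2 * b) ^ 2
      = 4 * cP p * ((p.1 : ℝ) ^ 2 + (p.2 : ℝ) ^ 2) * (a ^ 2 + b ^ 2) := by
  obtain ⟨p1, p2⟩ := p
  dsimp only at hp1 hp12 hp2 ⊢
  rcases hp1.eq_or_lt with rfl | hp1
  · have : nbrOffsets (0, p2) = {(0, p2), (0, -p2), (p2, 0), (-p2, 0)} := by
      ext v; simp [nbrOffsets]
    rw [this, cP, if_neg (by omega), if_pos (by simp)]
    repeat rw [Finset.sum_insert (by simp; omega)]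
    rw [Finset.sum_singleton]; push_cast; ring
  rcases hp12.eq_or_lt with rfl | hp12
  · have : nbrOffsets (p1, p1) = {(p1, p1), (p1, -p1), (-p1, p1), (-p1, -p1)} := by
      ext v; simp [nbrOffsets]
    rw [this, cP, if_neg (by omega), if_pos (by simp)]
    repeat rw [Finset.sum_insert (by simp; omega)]
    rw [Finset.sum_singleton]; push_cast; ring
  · rw [nbrOffsets, cP, if_neg (by omega), if_neg (by omega)]
    repeat rw [Finset.sum_insert (by simp; omega)]
    rw [Finset.sum_singleton]; push_cast; ring

theorem ContinuousLinearMap.apply_eq_fst_mul_add_snd_mul (φ : ℝ × ℝ →L[ℝ] ℝ) (v : ℝ × ℝ) :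
    φ v = v.1 * φ (1, 0) + v.2 * φ (0, 1) := by
  conv_lhs => rw [show v = v.1 • ((1 : ℝ), (0 : ℝ)) + v.2 • ((0 : ℝ), (1 : ℝ)) by ext <;> simp]
  rw [map_add, map_smul, map_smul, smul_eq_mul, smul_eq_mul]

theorem HasStrictFDerivAt.tendsto_finsum_isNbr_sq_div {f : ℝ × ℝ → ℝ} {φ : ℝ × ℝ →L[ℝ] ℝ}
    {x : ℝ × ℝ} (hf : HasStrictFDerivAt f φ x) {p : ℤ × ℤ} (hp1 : 0 ≤ p.1) (hp12 : p.1 ≤ p.2)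
    (hp2 : p.2 ≠ 0) :
    Tendsto (fun l => (1 / l ^ 2) * ∑ᶠ x' ∈ {x' | isNbr p l x x'}, (Iavg f x' l - Iavg f x l) ^ 2)
      (𝓝[>] 0)
      (𝓝 (4 * cP p * ((p.1 : ℝ) ^ 2 + (p.2 : ℝ) ^ 2) * (φ (1, 0) ^ 2 + φ (0, 1) ^ 2))) := by
  have hlim := tendsto_finsetSum (nbrOffsets p) fun v _ =>
    (hf.tendsto_Iavg_sub_div ((v.1 : ℝ), (v.2 : ℝ))).pow 2
  rw [Finset.sum_congr rfl fun v _ => by rw [φ.apply_eq_fst_mul_add_snd_mul],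
    sum_nbrOffsets_sq hp1 hp12 hp2] at hlim
  refine hlim.congr' (eventually_nhdsWithin_of_forall fun l (hl : 0 < l) => ?_)
  dsimp only
  rw [finsum_isNbr_eq_sum hp1 (hp1.trans hp12) hl, Finset.mul_sum]
  exact Finset.sum_congr rfl fun v _ => by ring

theorem stmt13_general (P : Finset (ℤ × ℤ))
    (hP : ∀ p ∈ P, 0 ≤ p.1 ∧ p.1 ≤ p.2 ∧ p.2 ≠ 0)
    (A : ℤ × ℤ → ℝ)
    (hA2 : ∑ p ∈ P, ((p.1 : ℝ) ^ 2 + (p.2 : ℝ) ^ 2) * cP p * A p ≠ 0)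
    (Ω : Set (ℝ × ℝ)) (hΩ : IsOpen Ω) (f : ℝ × ℝ → ℝ) (hf : ContDiffOn ℝ 1 f Ω)
    (x : ℝ × ℝ) (hx : x ∈ Ω) :
    Filter.Tendsto
      (fun l : ℝ =>
        (1 / 2) * ((1 / 2) * (∑ p ∈ P, ((p.1 : ℝ) ^ 2 + (p.2 : ℝ) ^ 2) * cP p * A p)⁻¹) *
          ((1 / l ^ 2) * ∑ p ∈ P, A p *
            ∑ᶠ x' ∈ {x' : ℝ × ℝ | isNbr p l x x'}, (Iavg f x' l - Iavg f x l) ^ 2))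
      (𝓝[>] (0 : ℝ))
      (𝓝 ((pd1 f x) ^ 2 + (pd2 f x) ^ 2)) := by
  unfold pd1 pd2
  set S := ∑ p ∈ P, ((p.1 : ℝ) ^ 2 + (p.2 : ℝ) ^ 2) * cP p * A p
  set G := fderiv ℝ f x (1, 0) ^ 2 + fderiv ℝ f x (0, 1) ^ 2
  have hderiv : HasStrictFDerivAt f (fderiv ℝ f x) x :=
    (hf.contDiffAt (hΩ.mem_nhds hx)).hasStrictFDerivAt one_ne_zero
  have hsum := tendsto_finsetSum P fun p hp =>
    (hderiv.tendsto_finsum_isNbr_sq_div (hP p hp).1 (hP p hp).2.1 (hP p hp).2.2).const_mul (A p)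
  have hlimit : ∑ p ∈ P, A p * (4 * cP p * ((p.1 : ℝ) ^ 2 + (p.2 : ℝ) ^ 2) * G) = 4 * S * G := by
    rw [Finset.mul_sum, Finset.sum_mul]
    exact Finset.sum_congr rfl fun p _ => by ring
  rw [hlimit] at hsum
  convert hsum.const_mul ((1 / 2) * ((1 / 2) * S⁻¹)) using 2
  · rw [Finset.mul_sum]
    congr 1
    exact Finset.sum_congr rfl fun p _ => by ring
  · field_simp
    ring

/-- recovering `|∇f(x)|²` from averages (Lemma 3.1). -/
theorem stmt13 (P : Finset (ℤ × ℤ))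
    (hP : ∀ p ∈ P, 0 ≤ p.1 ∧ p.1 ≤ p.2 ∧ p.2 ≠ 0)
    (A : ℤ × ℤ → ℝ) (hA : 8 * ∑ p ∈ P, cP p * A p = 1)
    (hA2 : ∑ p ∈ P, ((p.1 : ℝ) ^ 2 + (p.2 : ℝ) ^ 2) * cP p * A p ≠ 0)
    (Ω : Set (ℝ × ℝ)) (hΩ : IsOpen Ω) (f : ℝ × ℝ → ℝ) (hf : ContDiffOn ℝ 1 f Ω)
    (x : ℝ × ℝ) (hx : x ∈ Ω) :
    Filter.Tendsto
      (fun l : ℝ =>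
        (1 / 2) * ((1 / 2) * (∑ p ∈ P, ((p.1 : ℝ) ^ 2 + (p.2 : ℝ) ^ 2) * cP p * A p)⁻¹) *
          ((1 / l ^ 2) * ∑ p ∈ P, A p *
            ∑ᶠ x' ∈ {x' : ℝ × ℝ | isNbr p l x x'}, (Iavg f x' l - Iavg f x l) ^ 2))
      (𝓝[>] (0 : ℝ))
      (𝓝 ((pd1 f x) ^ 2 + (pd2 f x) ^ 2)) :=
  stmt13_general P hP A hA2 Ω hΩ f hf x hx
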